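/- arXiv:1807.00867 — 7 statements merged into one kernel-verified Lean document; each statement's English description precedes it below -/
import Mathlib

section
/- Let γ ∈ [0, 1/4) and let μ_r, μ_s, ν_r, ν_s ∈ ℝ satisfy |ν_r − μ_r| ≤ γ·|μ_r − μ_s| and |ν_s − μ_s| ≤ γ·|μ_r − μ_s|. If a point x ∈ ℝ satisfies |x − ν_r| ≤ |x − ν_s| (i.e. x is assigned to centroid ν_r), then |x − μ_s| ≥ (1/2 − 2γ)·|μ_r − μ_s|. -/
/-- Lemma 10(1) of the paper: if centroids are within relative error `γ < 1/4`
of the true means and `x` is assigned to centroid `ν_r`, then `x` is far from `μ_s`. -/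
theorem clustering_assigned_far_from_other_mean
    (γ μr μs νr νs x : ℝ) (hγ0 : 0 ≤ γ) (hγ : γ < 1/4)
    (hr : |νr - μr| ≤ γ * |μr - μs|)
    (hs : |νs - μs| ≤ γ * |μr - μs|)
    (hx : |x - νr| ≤ |x - νs|) :
    (1/2 - 2*γ) * |μr - μs| ≤ |x - μs| := by
  have h1 : |μr - μs| ≤ |x - μr| + |x - μs| := by
    calc |μr - μs| = |(x - μs) - (x - μr)| := by ring_nf
    _ ≤ |x - μs| + |x - μr| := abs_sub _ _
    _ = |x - μr| + |x - μs| := by ring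
  have h2 : |x - μr| ≤ |x - νr| + |νr - μr| := by
    calc |x - μr| = |(x - νr) + (νr - μr)| := by ring_nf
    _ ≤ _ := abs_add_le _ _
  have h3 : |x - νs| ≤ |x - μs| + |νs - μs| := by
    calc |x - νs| = |(x - μs) - (νs - μs)| := by ring_nf
    _ ≤ _ := abs_sub _ _
  nlinarith [abs_nonneg (μr - μs), mul_nonneg hγ0 (abs_nonneg (μr - μs))]
end

section
/- Let γ ∈ [0, 1/4) and let μ_r, μ_s, ν_r, ν_s ∈ ℝ satisfy |ν_r − μ_r| ≤ γ·|μ_r − μ_s| and |ν_s − μ_s| ≤ γ·|μ_r − μ_s|. If a point x ∈ ℝ satisfies |x − ν_r| ≤ |x − ν_s| (i.e. x is assigned to centroid ν_r), then |x − μ_r| ≤ (1/(1 − 4γ))·|x − μ_s|. -/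
/-- Lemma 10(2) of the paper: if centroids are within relative error `γ < 1/4`
of the true means and `x` is assigned to centroid `ν_r`, then
`|x − μ_r| ≤ |x − μ_s| / (1 − 4γ)`. -/
theorem clustering_assigned_close_to_own_mean
    (γ μr μs νr νs x : ℝ) (hγ0 : 0 ≤ γ) (hγ : γ < 1/4)
    (hr : |νr - μr| ≤ γ * |μr - μs|)
    (hs : |νs - μs| ≤ γ * |μr - μs|)
    (hx : |x - νr| ≤ |x - νs|) :
    |x - μr| ≤ (1 / (1 - 4*γ)) * |x - μs| := by
  have h1 : |x - μr| ≤ |x - νr| + |νr - μr| := abs_sub_le x νr μr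
  have h2 : |x - νs| ≤ |x - μs| + |μs - νs| := abs_sub_le x μs νs
  have h2' : |μs - νs| = |νs - μs| := abs_sub_comm _ _
  have h3 : |μr - μs| ≤ |μr - x| + |x - μs| := abs_sub_le μr x μs
  have h3' : |μr - x| = |x - μr| := abs_sub_comm _ _
  have hb : 0 ≤ |x - μs| := abs_nonneg _
  have hpos : 0 < 1 - 4*γ := by linarith
  have p1 : γ * |μr - μs| ≤ γ * (|x - μr| + |x - μs|) :=
    mul_le_mul_of_nonneg_left (by linarith) hγ0
  rw [one_div, inv_mul_eq_div, le_div_iff₀ hpos]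
  nlinarith [abs_nonneg (x - μr), mul_nonneg hγ0 hb,
    mul_nonneg hγ0 (abs_nonneg (x - μr)),
    mul_nonneg (mul_nonneg hγ0 hγ0) hb,
    mul_nonneg (mul_nonneg hγ0 hγ0) (abs_nonneg (x - μr))]
end

section
/- Fix s ∈ {1,…,β} and γ ∈ [0, 1/4). Assume ρ_in^s + ρ_out^s < 1/2, and assume that for every r ≠ s with T_r ∩ S_s nonempty, |g(S_s ∩ T_r) − μ_r| ≥ (1 − 4γ)·|g(S_s ∩ T_r) − μ_s|. Then |g(S_s) − μ_s| ≤ 2·(1 − ρ_out^s)·|g(S_s ∩ T_s) − μ_s| + (2/(1 − 4γ))·Σ_{r ≠ s, T_r ∩ S_s ≠ ∅} ρ_in^s(r)·|g(S_s ∩ T_r) − μ_r|. -/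
open Finset
open scoped Classical
open scoped BigOperators

/-
The deviation of the mean of `S_s` from `μ_s` is the `|S_s ∩ T_r|`-weighted average of the
deviations of the cell means `g(S_s ∩ T_r)` from `μ_s`. Few points are misclassified, so
`|S_s| ≥ |S_s ∩ T_s| = (1 - ρ_out) n_s > n_s / 2`, and each weight `|S_s ∩ T_r| / |S_s|` is
at most `2 |S_s ∩ T_r| / n_s`. The cell `r = s` then contributes at most
`2 (1 - ρ_out) |g(S_s ∩ T_s) - μ_s|`, and for `r ≠ s` the hypothesis on the cells trades
`|g - μ_s|` for `|g - μ_r| / (1 - 4γ)`.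
-/

namespace Finset

theorem sum_mul_le_inv_mul_sum_filter {ι : Type*} {s : Finset ι} {p : ι → Prop}
    [DecidablePred p] {w a b : ι → ℝ} {κ : ℝ} (hκ : 0 < κ) (hw : ∀ i ∈ s, 0 ≤ w i)
    (hp : ∀ i ∈ s, ¬p i → w i = 0) (hab : ∀ i ∈ s, p i → κ * a i ≤ b i) :
    ∑ i ∈ s, w i * a i ≤ κ⁻¹ * ∑ i ∈ s with p i, w i * b i := by
  rw [← sum_filter_of_ne fun i hi hne => by_contra fun h => hne (by rw [hp i hi h, zero_mul]),
    mul_sum]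
  refine sum_le_sum fun i hi => ?_
  rw [mem_filter] at hi
  rw [le_inv_mul_iff₀ hκ, mul_left_comm]
  exact mul_le_mul_of_nonneg_left (hab i hi.1 hi.2) (hw i hi.1)

variable {α ι : Type*} [Fintype ι] [DecidableEq α] {A : Finset α} {T : ι → Finset α}

theorem sum_eq_sum_sum_inter_of_existsUnique {M : Type*} [AddCommMonoid M]
    (hT : ∀ i ∈ A, ∃! r, i ∈ T r) (f : α → M) :
    ∑ i ∈ A, f i = ∑ r, ∑ i ∈ A ∩ T r, f i := by
  simp_rw [← filter_mem_eq_inter, sum_filter]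
  rw [sum_comm]
  refine sum_congr rfl fun i hi => ?_
  obtain ⟨r₀, hr₀, huniq⟩ := hT i hi
  rw [sum_eq_single r₀ (fun r _ hr => if_neg fun h => hr (huniq r h)) (by simp), if_pos hr₀]

theorem card_eq_sum_card_inter_of_existsUnique (hT : ∀ i ∈ A, ∃! r, i ∈ T r) :
    #A = ∑ r, #(A ∩ T r) := by
  simp_rw [card_eq_sum_ones]
  exact sum_eq_sum_sum_inter_of_existsUnique hT _

theorem card_mul_abs_expect_sub_le (hT : ∀ i ∈ A, ∃! r, i ∈ T r) (x : α → ℝ)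
    (c : ℝ) :
    #A * |𝔼 i ∈ A, x i - c| ≤ ∑ r, #(A ∩ T r) * |𝔼 i ∈ A ∩ T r, x i - c| := by
  have card_mul_expect_sub (B : Finset α) :
      (#B : ℝ) * (𝔼 i ∈ B, x i - c) = ∑ i ∈ B, (x i - c) := by
    rw [mul_sub, card_mul_expect, sum_sub_distrib, sum_const, nsmul_eq_mul]
  calc (#A : ℝ) * |𝔼 i ∈ A, x i - c|
      = |∑ r, ∑ i ∈ A ∩ T r, (x i - c)| := by
        rw [← sum_eq_sum_sum_inter_of_existsUnique hT, ← card_mul_expect_sub, abs_mul,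
          Nat.abs_cast]
    _ ≤ ∑ r, |∑ i ∈ A ∩ T r, (x i - c)| := abs_sum_le_sum_abs _ _
    _ = ∑ r, #(A ∩ T r) * |𝔼 i ∈ A ∩ T r, x i - c| := by
        simp_rw [← card_mul_expect_sub, abs_mul, Nat.abs_cast]

theorem abs_expect_sub_le_of_le_two_mul_card (hT : ∀ i ∈ A, ∃! r, i ∈ T r) (x : α → ℝ)
    (c : ℝ) {n : ℝ} (hn : 0 < n) (hA : n ≤ 2 * #A) :
    |𝔼 i ∈ A, x i - c| ≤ 2 * ∑ r, #(A ∩ T r) / n * |𝔼 i ∈ A ∩ T r, x i - c| := by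
  have hsum := card_mul_abs_expect_sub_le hT x c
  simp_rw [div_mul_eq_mul_div, ← sum_div, mul_div_assoc', le_div_iff₀ hn]
  nlinarith [abs_nonneg (𝔼 i ∈ A, x i - c)]

theorem card_inter_div_card_eq_one_sub [DecidableEq ι] (hT : ∀ i ∈ A, ∃! r, i ∈ T r)
    (hA : A.Nonempty) (s : ι) :
    (#(A ∩ T s) : ℝ) / #A = 1 - ∑ r ∈ univ.erase s, (#(A ∩ T r) : ℝ) / #A := by
  rw [eq_sub_iff_add_eq, ← sum_div, ← add_div,
    add_sum_erase _ (fun r => (#(A ∩ T r) : ℝ)) (mem_univ s), ← Nat.cast_sum,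
    ← card_eq_sum_card_inter_of_existsUnique hT, div_self]
  exact_mod_cast hA.card_pos.ne'

end Finset

theorem clustering_mean_decomposition_bound_general
    (N β : ℕ) (x : Fin N → ℝ) (μ : Fin β → ℝ)
    (T S : Fin β → Finset (Fin N))
    (hTpart : ∀ i : Fin N, ∃! t : Fin β, i ∈ T t)
    (hTne : ∀ t : Fin β, (T t).Nonempty)
    (hSpart : ∀ i : Fin N, ∃! t : Fin β, i ∈ S t)
    (s : Fin β) (γ : ℝ) (hγ : γ < 1/4)
    (hρ : (∑ r ∈ Finset.univ.erase s, ((T r ∩ S s).card : ℝ) / ((T s).card : ℝ))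
        + (∑ r ∈ Finset.univ.erase s, ((T s ∩ S r).card : ℝ) / ((T s).card : ℝ)) < 1/2)
    (hcell : ∀ r ∈ Finset.univ.erase s, (T r ∩ S s).Nonempty →
      |(∑ i ∈ S s ∩ T r, x i) / ((S s ∩ T r).card : ℝ) - μ r| ≥
        (1 - 4*γ) * |(∑ i ∈ S s ∩ T r, x i) / ((S s ∩ T r).card : ℝ) - μ s|) :
    |(∑ i ∈ S s, x i) / ((S s).card : ℝ) - μ s| ≤
      2 * (1 - ∑ r ∈ Finset.univ.erase s, ((T s ∩ S r).card : ℝ) / ((T s).card : ℝ)) *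
        |(∑ i ∈ S s ∩ T s, x i) / ((S s ∩ T s).card : ℝ) - μ s| +
      (2 / (1 - 4*γ)) *
        ∑ r ∈ (Finset.univ.erase s).filter (fun r => (T r ∩ S s).Nonempty),
          (((T r ∩ S s).card : ℝ) / ((T s).card : ℝ)) *
            |(∑ i ∈ S s ∩ T r, x i) / ((S s ∩ T r).card : ℝ) - μ r| := by
  simp only [← expect_eq_sum_div_card] at hcell ⊢
  simp_rw [inter_comm (T _) (S s)] at hcell ⊢
  have hdiag := card_inter_div_card_eq_one_sub (fun i _ => hSpart i) (hTne s) s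
  rw [inter_comm (T s)] at hdiag
  set n : ℝ := ((T s).card : ℝ)
  have hn : 0 < n := Nat.cast_pos.2 (hTne s).card_pos
  have hcardS : n ≤ 2 * (S s).card := by
    have : ((S s ∩ T s).card : ℝ) ≤ (S s).card := mod_cast card_le_card inter_subset_left
    have : 0 ≤ ∑ r ∈ univ.erase s, ((T r ∩ S s).card : ℝ) / n :=
      sum_nonneg fun r _ => by positivity
    rw [div_eq_iff hn.ne'] at hdiag
    nlinarith
  have hoff := sum_mul_le_inv_mul_sum_filter (s := univ.erase s)
    (w := fun r => ((S s ∩ T r).card : ℝ) / n) (by linarith : 0 < 1 - 4 * γ)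
    (fun r _ => by positivity) (fun r _ hr => by simp [not_nonempty_iff_eq_empty.1 hr])
    hcell
  calc |𝔼 i ∈ S s, x i - μ s|
      ≤ 2 * ∑ r, (S s ∩ T r).card / n * |𝔼 i ∈ S s ∩ T r, x i - μ s| :=
        abs_expect_sub_le_of_le_two_mul_card (fun i _ => hTpart i) x (μ s) hn hcardS
    _ = 2 * (1 - ∑ r ∈ univ.erase s, ((T s ∩ S r).card : ℝ) / n) *
          |𝔼 i ∈ S s ∩ T s, x i - μ s| +
        2 * ∑ r ∈ univ.erase s, (S s ∩ T r).card / n * |𝔼 i ∈ S s ∩ T r, x i - μ s| :=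
        by rw [← add_sum_erase _ _ (mem_univ s), hdiag]; ring
    _ ≤ _ := by rw [div_eq_mul_inv]; linarith

/-- Lemma 12 of the paper: if few points are misclassified and within-cell
empirical means of misclassified cells are closer to their own true mean
(up to factor `1 − 4γ`), then the empirical mean of `S_s` is controlled by the
within-cell deviations. Here `g(A) = (∑_{i∈A} x_i)/|A|`. -/
theorem clustering_mean_decomposition_bound
    (N β : ℕ) (x : Fin N → ℝ) (μ ν : Fin β → ℝ)
    (T S : Fin β → Finset (Fin N))
    (hTpart : ∀ i : Fin N, ∃! t : Fin β, i ∈ T t)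
    (hTne : ∀ t : Fin β, (T t).Nonempty)
    (hSpart : ∀ i : Fin N, ∃! t : Fin β, i ∈ S t)
    (hSnear : ∀ t : Fin β, ∀ i ∈ S t, ∀ r : Fin β, |x i - ν t| ≤ |x i - ν r|)
    (s : Fin β) (γ : ℝ) (hγ0 : 0 ≤ γ) (hγ : γ < 1/4)
    (hρ : (∑ r ∈ Finset.univ.erase s, ((T r ∩ S s).card : ℝ) / ((T s).card : ℝ))
        + (∑ r ∈ Finset.univ.erase s, ((T s ∩ S r).card : ℝ) / ((T s).card : ℝ)) < 1/2)
    (hcell : ∀ r ∈ Finset.univ.erase s, (T r ∩ S s).Nonempty →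
      |(∑ i ∈ S s ∩ T r, x i) / ((S s ∩ T r).card : ℝ) - μ r| ≥
        (1 - 4*γ) * |(∑ i ∈ S s ∩ T r, x i) / ((S s ∩ T r).card : ℝ) - μ s|) :
    |(∑ i ∈ S s, x i) / ((S s).card : ℝ) - μ s| ≤
      2 * (1 - ∑ r ∈ Finset.univ.erase s, ((T s ∩ S r).card : ℝ) / ((T s).card : ℝ)) *
        |(∑ i ∈ S s ∩ T s, x i) / ((S s ∩ T s).card : ℝ) - μ s| +
      (2 / (1 - 4*γ)) *
        ∑ r ∈ (Finset.univ.erase s).filter (fun r => (T r ∩ S s).Nonempty),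
          (((T r ∩ S s).card : ℝ) / ((T s).card : ℝ)) *
            |(∑ i ∈ S s ∩ T r, x i) / ((S s ∩ T r).card : ℝ) - μ r| :=
  clustering_mean_decomposition_bound_general N β x μ T S hTpart hTne hSpart s γ hγ hρ hcell
end

section
/- Let α > 0 and suppose the clustering cost of the centroids ν_1,…,ν_β satisfies Σ_{i=1}^N min_{r∈{1,…,β}} |x_i − ν_r| ≤ α·φ_T. Then for every true cluster T_s, s ∈ {1,…,β}, there exists a centroid ν_r, r ∈ {1,…,β}, with |ν_r − g(T_s)| ≤ (α + 1)·φ_T / n_s. -/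
open Finset

/-- First step of Lemma 9 of the paper: if the centroids `ν` achieve clustering
cost at most `α·φ_T`, then every true cluster mean `g(T_s)` has some centroid
within `(α+1)·φ_T/n_s` of it, where
`φ_T = ∑_s ∑_{i∈T_s} |x_i − g(T_s)|` and `g(A) = (∑_{i∈A} x_i)/|A|`. -/
theorem approx_centroid_near_each_cluster_mean
    (N β : ℕ) (hβ : 0 < β) (x : Fin N → ℝ) (ν : Fin β → ℝ)
    (T : Fin β → Finset (Fin N))
    (hTpart : ∀ i : Fin N, ∃! t : Fin β, i ∈ T t)
    (hTne : ∀ t : Fin β, (T t).Nonempty)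
    (α : ℝ) (hα : 0 < α)
    (hcost : ∑ i : Fin N,
        (Finset.univ.inf' ⟨⟨0, hβ⟩, Finset.mem_univ _⟩ (fun r => |x i - ν r|))
      ≤ α * ∑ t : Fin β, ∑ i ∈ T t, |x i - (∑ j ∈ T t, x j) / ((T t).card : ℝ)|) :
    ∀ s : Fin β, ∃ r : Fin β,
      |ν r - (∑ j ∈ T s, x j) / ((T s).card : ℝ)| ≤
        (α + 1) * (∑ t : Fin β, ∑ i ∈ T t, |x i - (∑ j ∈ T t, x j) / ((T t).card : ℝ)|)
          / ((T s).card : ℝ) := by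
  intro s
  set φ : ℝ := ∑ t : Fin β, ∑ i ∈ T t, |x i - (∑ j ∈ T t, x j) / ((T t).card : ℝ)| with hφ
  set μ : ℝ := (∑ j ∈ T s, x j) / ((T s).card : ℝ) with hμ
  set m : Fin N → ℝ := fun i =>
    (Finset.univ.inf' ⟨⟨0, hβ⟩, Finset.mem_univ _⟩ (fun r => |x i - ν r|)) with hm
  have hn : (0 : ℝ) < ((T s).card : ℝ) := by
    exact_mod_cast Finset.card_pos.mpr (hTne s)
  have hmnn : ∀ i, 0 ≤ m i := fun i =>
    Finset.le_inf' _ _ (fun r _ => abs_nonneg _)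
  -- sum over T s of m ≤ sum over univ of m ≤ α φ
  have h1 : ∑ i ∈ T s, m i ≤ α * φ := by
    refine le_trans (Finset.sum_le_sum_of_subset_of_nonneg (Finset.subset_univ _)
      (fun i _ _ => hmnn i)) hcost
  have h2 : ∑ i ∈ T s, |x i - μ| ≤ φ := by
    rw [hφ]
    exact Finset.single_le_sum
      (f := fun t => ∑ i ∈ T t, |x i - (∑ j ∈ T t, x j) / ((T t).card : ℝ)|)
      (fun t _ => Finset.sum_nonneg fun i _ => abs_nonneg _) (Finset.mem_univ s)
  -- averaging: exists i ∈ T s with m i + |x i - μ| ≤ (α+1)φ / n_s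
  have hsum : ∑ i ∈ T s, (m i + |x i - μ|) ≤ ∑ _i ∈ T s, ((α + 1) * φ / ((T s).card : ℝ)) := by
    rw [Finset.sum_const, nsmul_eq_mul, Finset.sum_add_distrib]
    have hc : ((T s).card : ℝ) * ((α + 1) * φ / ((T s).card : ℝ)) = (α + 1) * φ := by
      field_simp
    rw [hc]
    calc ∑ i ∈ T s, m i + ∑ i ∈ T s, |x i - μ| ≤ α * φ + φ := add_le_add h1 h2
      _ = (α + 1) * φ := by ring
  obtain ⟨i, hi, hile⟩ := Finset.exists_le_of_sum_le (hTne s) hsum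
  obtain ⟨r, _, hr⟩ := Finset.exists_mem_eq_inf' (⟨⟨0, hβ⟩, Finset.mem_univ _⟩ :
    (Finset.univ : Finset (Fin β)).Nonempty) (fun r => |x i - ν r|)
  refine ⟨r, ?_⟩
  have : |ν r - μ| ≤ |x i - ν r| + |x i - μ| := by
    have := abs_sub_abs_le_abs_sub (x i - μ) (x i - ν r)
    calc |ν r - μ| = |(x i - μ) - (x i - ν r)| := by ring_nf
      _ ≤ |x i - μ| + |x i - ν r| := abs_sub _ _
      _ = |x i - ν r| + |x i - μ| := by ring
  calc |ν r - μ| ≤ |x i - ν r| + |x i - μ| := this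
    _ = m i + |x i - μ| := by rw [hm]; simp [← hr]
    _ ≤ (α + 1) * φ / ((T s).card : ℝ) := hile
end

section
/- Let α > 0 and suppose Σ_{i=1}^N min_{r∈{1,…,β}} |x_i − ν_r| ≤ α·φ_T. Then: (a) for every s ∈ {1,…,β} there exists r ∈ {1,…,β} with |ν_r − μ_s| ≤ 2(α + 1)·φ*/n_s; and (b) if moreover c > 0 and the separability condition |μ_t − μ_s| ≥ c·φ*·(1/n_s + 1/n_t) holds for all t ≠ s, then that same centroid satisfies |ν_r − μ_s| ≤ (2(α + 1)/c)·|μ_t − μ_s| for every t ≠ s (so the relative centroid error γ is at most 2(α + 1)/c). -/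
/-!
Let `ν_r` be the centroid nearest to `μ_s`. For every point `x_i` of cluster `s`, the triangle
inequality through the centroid nearest to `x_i` gives
`|ν_r - μ_s| ≤ min_r' |x_i - ν_r'| + |x_i - μ_s|`. Summing over the `n_s` points of the cluster
bounds `n_s |ν_r - μ_s|` by the approximate cost plus `φ*`, and the approximate cost is at most
`α φ_T ≤ 2α φ*` because replacing the reference mean of a cluster by its average at most doubles
its cost. Part (b) follows by comparing `φ*/n_s` with the separation `|μ_t - μ_s|`.
-/

open Finset

section Average

variable {ι : Type*} (S : Finset ι) (f : ι → ℝ) (m : ℝ)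

theorem card_mul_abs_average_sub_le :
    (S.card : ℝ) * |(∑ j ∈ S, f j) / S.card - m| ≤ ∑ i ∈ S, |f i - m| := by
  rcases S.eq_empty_or_nonempty with rfl | hS
  · simp
  have hcard : (S.card : ℝ) ≠ 0 := by exact_mod_cast hS.card_pos.ne'
  calc (S.card : ℝ) * |(∑ j ∈ S, f j) / S.card - m|
      = |S.card * ((∑ j ∈ S, f j) / S.card - m)| := by rw [abs_mul, Nat.abs_cast]
    _ = |∑ i ∈ S, (f i - m)| := by
        rw [mul_sub, mul_div_cancel₀ _ hcard, sum_sub_distrib, sum_const, nsmul_eq_mul]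
    _ ≤ ∑ i ∈ S, |f i - m| := abs_sum_le_sum_abs _ _

theorem sum_abs_sub_average_le_two_mul :
    ∑ i ∈ S, |f i - (∑ j ∈ S, f j) / S.card| ≤ 2 * ∑ i ∈ S, |f i - m| := by
  set g := (∑ j ∈ S, f j) / S.card
  calc ∑ i ∈ S, |f i - g|
      ≤ ∑ i ∈ S, (|f i - m| + |g - m|) :=
        sum_le_sum fun i _ => (abs_sub_le _ m _).trans_eq (by rw [abs_sub_comm m])
    _ = ∑ i ∈ S, |f i - m| + S.card * |g - m| := by
        rw [sum_add_distrib, sum_const, nsmul_eq_mul]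
    _ ≤ 2 * ∑ i ∈ S, |f i - m| := by linarith [card_mul_abs_average_sub_le S f m]

end Average

section NearestCenter

variable {κ : Type*} (R : Finset κ) (hR : R.Nonempty) (ν : κ → ℝ) {m : ℝ} {r : κ}

theorem abs_sub_le_inf'_add_of_isNearest (hr : ∀ r' ∈ R, |ν r - m| ≤ |ν r' - m|) (y : ℝ) :
    |ν r - m| ≤ R.inf' hR (fun r' => |y - ν r'|) + |y - m| := by
  obtain ⟨r', hr', hr'_eq⟩ := R.exists_mem_eq_inf' hR (fun r' => |y - ν r'|)
  calc |ν r - m| ≤ |ν r' - m| := hr r' hr'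
    _ ≤ |ν r' - y| + |y - m| := abs_sub_le _ _ _
    _ = R.inf' hR (fun r' => |y - ν r'|) + |y - m| := by rw [hr'_eq, abs_sub_comm]

theorem card_mul_abs_sub_le_of_isNearest (hr : ∀ r' ∈ R, |ν r - m| ≤ |ν r' - m|)
    {ι : Type*} (S : Finset ι) (x : ι → ℝ) :
    (S.card : ℝ) * |ν r - m| ≤
      ∑ i ∈ S, R.inf' hR (fun r' => |x i - ν r'|) + ∑ i ∈ S, |x i - m| := by
  rw [← sum_add_distrib, ← nsmul_eq_mul, ← sum_const]
  exact sum_le_sum fun i _ => abs_sub_le_inf'_add_of_isNearest R hR ν hr (x i)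

end NearestCenter

theorem approx_centroid_error_bound_general
    (N β : ℕ) (hβ : 0 < β) (x : Fin N → ℝ) (μ ν : Fin β → ℝ)
    (T : Fin β → Finset (Fin N))
    (hTne : ∀ t : Fin β, (T t).Nonempty)
    (α : ℝ) (hα : 0 < α)
    (hcost : ∑ i : Fin N,
        (Finset.univ.inf' ⟨⟨0, hβ⟩, Finset.mem_univ _⟩ (fun r => |x i - ν r|))
      ≤ α * ∑ t : Fin β, ∑ i ∈ T t, |x i - (∑ j ∈ T t, x j) / ((T t).card : ℝ)|)
    (s : Fin β) :
    ∃ r : Fin β,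
      |ν r - μ s| ≤
        2 * (α + 1) * (∑ t : Fin β, ∑ i ∈ T t, |x i - μ t|) / ((T s).card : ℝ) ∧
      ∀ c : ℝ, 0 < c →
        (∀ t : Fin β, t ≠ s →
          |μ t - μ s| ≥ c * (∑ u : Fin β, ∑ i ∈ T u, |x i - μ u|) *
            (1 / ((T s).card : ℝ) + 1 / ((T t).card : ℝ))) →
        ∀ t : Fin β, t ≠ s →
          |ν r - μ s| ≤ (2 * (α + 1) / c) * |μ t - μ s| := by
  set φ := ∑ t : Fin β, ∑ i ∈ T t, |x i - μ t|
  have hφ : 0 ≤ φ := by positivity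
  have hns : (0 : ℝ) < (T s).card := mod_cast (hTne s).card_pos
  have huniv : (univ : Finset (Fin β)).Nonempty := ⟨⟨0, hβ⟩, mem_univ _⟩
  obtain ⟨r, -, hr⟩ := univ.exists_min_image (fun r => |ν r - μ s|) huniv
  have hφT : ∑ t : Fin β, ∑ i ∈ T t, |x i - (∑ j ∈ T t, x j) / ((T t).card : ℝ)| ≤ 2 * φ :=
    (sum_le_sum fun t _ => sum_abs_sub_average_le_two_mul (T t) x (μ t)).trans_eq
      (mul_sum _ _ _).symm
  have hkey : ((T s).card : ℝ) * |ν r - μ s| ≤ 2 * (α + 1) * φ :=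
    calc ((T s).card : ℝ) * |ν r - μ s|
        ≤ ∑ i ∈ T s, univ.inf' huniv (fun r' => |x i - ν r'|) + ∑ i ∈ T s, |x i - μ s| :=
          card_mul_abs_sub_le_of_isNearest univ huniv ν hr (T s) x
      _ ≤ ∑ i, univ.inf' huniv (fun r' => |x i - ν r'|) + φ :=
          add_le_add (sum_le_univ_sum_of_nonneg fun i => le_inf' _ _ fun r' _ => abs_nonneg _)
            (single_le_sum (f := fun t => ∑ i ∈ T t, |x i - μ t|) (fun t _ => by positivity)
              (mem_univ s))
      _ ≤ α * (2 * φ) + φ := by gcongr; exact hcost.trans (by gcongr)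
      _ ≤ 2 * (α + 1) * φ := by linarith
  have hnear : |ν r - μ s| ≤ 2 * (α + 1) * φ / (T s).card := by
    rw [le_div_iff₀ hns]; linarith
  refine ⟨r, hnear, fun c hc hsep t hts => ?_⟩
  calc |ν r - μ s| ≤ 2 * (α + 1) * φ / (T s).card := hnear
    _ = 2 * (α + 1) / c * (c * φ * (1 / (T s).card + 0)) := by field_simp; ring
    _ ≤ 2 * (α + 1) / c * (c * φ * (1 / (T s).card + 1 / (T t).card)) := by gcongr; positivity
    _ ≤ 2 * (α + 1) / c * |μ t - μ s| := by gcongr; exact hsep t hts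

/-- Lemma 9 of the paper: an `α`-approximation for the clustering cost yields,
for cluster `s`, a centroid `ν_r` with `|ν_r − μ_s| ≤ 2(α+1)·φ*/n_s`; if in
addition the separability condition `|μ_t − μ_s| ≥ c·φ*·(1/n_s + 1/n_t)` holds
for all `t ≠ s`, then the same centroid satisfies
`|ν_r − μ_s| ≤ (2(α+1)/c)·|μ_t − μ_s|` for every `t ≠ s`. -/
theorem approx_centroid_error_bound
    (N β : ℕ) (hβ : 0 < β) (x : Fin N → ℝ) (μ ν : Fin β → ℝ)
    (T : Fin β → Finset (Fin N))
    (hTpart : ∀ i : Fin N, ∃! t : Fin β, i ∈ T t)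
    (hTne : ∀ t : Fin β, (T t).Nonempty)
    (α : ℝ) (hα : 0 < α)
    (hcost : ∑ i : Fin N,
        (Finset.univ.inf' ⟨⟨0, hβ⟩, Finset.mem_univ _⟩ (fun r => |x i - ν r|))
      ≤ α * ∑ t : Fin β, ∑ i ∈ T t, |x i - (∑ j ∈ T t, x j) / ((T t).card : ℝ)|)
    (s : Fin β) :
    ∃ r : Fin β,
      |ν r - μ s| ≤
        2 * (α + 1) * (∑ t : Fin β, ∑ i ∈ T t, |x i - μ t|) / ((T s).card : ℝ) ∧
      ∀ c : ℝ, 0 < c →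
        (∀ t : Fin β, t ≠ s →
          |μ t - μ s| ≥ c * (∑ u : Fin β, ∑ i ∈ T u, |x i - μ u|) *
            (1 / ((T s).card : ℝ) + 1 / ((T t).card : ℝ))) →
        ∀ t : Fin β, t ≠ s →
          |ν r - μ s| ≤ (2 * (α + 1) / c) * |μ t - μ s| :=
  approx_centroid_error_bound_general N β hβ x μ ν T hTne α hα hcost s
end

section
/- Fix s ∈ {1,…,β}, ε > 0, and γ ∈ [0, 1/8]. Assume: (i) ρ_in^s + ρ_out^s < 1/2; (ii) for every r ≠ s with T_r ∩ S_s nonempty, |g(S_s ∩ T_r) − μ_r| ≥ (1 − 4γ)·|g(S_s ∩ T_r) − μ_s| and |g(S_s ∩ T_r) − μ_r| ≤ ε/4; and (iii) |g(S_s ∩ T_s) − μ_s| ≤ ε/4. Then |g(S_s) − μ_s| ≤ ε. -/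
open Finset

/-- Deterministic combination step in Lemma 8 of the paper: with few
misclassified points (`ρ_in^s + ρ_out^s < 1/2`), `γ ≤ 1/8`, and accurate
within-cell empirical means (each within `ε/4`), the empirical mean of `S_s`
is within `ε` of the true cluster mean `μ_s`. -/
theorem clustering_empirical_mean_accurate
    (N β : ℕ) (x : Fin N → ℝ) (μ ν : Fin β → ℝ)
    (T S : Fin β → Finset (Fin N))
    (hTpart : ∀ i : Fin N, ∃! t : Fin β, i ∈ T t)
    (hTne : ∀ t : Fin β, (T t).Nonempty)
    (hSpart : ∀ i : Fin N, ∃! t : Fin β, i ∈ S t)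
    (hSnear : ∀ t : Fin β, ∀ i ∈ S t, ∀ r : Fin β, |x i - ν t| ≤ |x i - ν r|)
    (s : Fin β) (ε : ℝ) (hε : 0 < ε)
    (γ : ℝ) (hγ0 : 0 ≤ γ) (hγ : γ ≤ 1/8)
    (hρ : (∑ r ∈ Finset.univ.erase s, ((T r ∩ S s).card : ℝ) / ((T s).card : ℝ))
        + (∑ r ∈ Finset.univ.erase s, ((T s ∩ S r).card : ℝ) / ((T s).card : ℝ)) < 1/2)
    (hcell : ∀ r ∈ Finset.univ.erase s, (T r ∩ S s).Nonempty →
      |(∑ i ∈ S s ∩ T r, x i) / ((S s ∩ T r).card : ℝ) - μ r| ≥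
        (1 - 4*γ) * |(∑ i ∈ S s ∩ T r, x i) / ((S s ∩ T r).card : ℝ) - μ s| ∧
      |(∑ i ∈ S s ∩ T r, x i) / ((S s ∩ T r).card : ℝ) - μ r| ≤ ε/4)
    (hown : |(∑ i ∈ S s ∩ T s, x i) / ((S s ∩ T s).card : ℝ) - μ s| ≤ ε/4) :
    |(∑ i ∈ S s, x i) / ((S s).card : ℝ) - μ s| ≤ ε := by
  classical
  -- membership in T t ↔ classification function equals t
  have hmemT : ∀ (i : Fin N) (t : Fin β), i ∈ T t ↔ (hTpart i).choose = t := by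
    intro i t
    constructor
    · intro h; exact ((hTpart i).choose_spec.2 t h).symm
    · intro h; rw [← h]; exact (hTpart i).choose_spec.1
  have hmemS : ∀ (i : Fin N) (t : Fin β), i ∈ S t ↔ (hSpart i).choose = t := by
    intro i t
    constructor
    · intro h; exact ((hSpart i).choose_spec.2 t h).symm
    · intro h; rw [← h]; exact (hSpart i).choose_spec.1
  -- splitting a sum over S s according to true clusters
  have hSsplit : ∀ (f : Fin N → ℝ),
      ∑ i ∈ S s, f i = ∑ r : Fin β, ∑ i ∈ S s ∩ T r, f i := by
    intro f
    rw [← Finset.sum_fiberwise (S s) (fun i => (hTpart i).choose) f]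
    refine Finset.sum_congr rfl fun r _ => ?_
    refine Finset.sum_congr ?_ (fun _ _ => rfl)
    ext i
    simp [Finset.mem_filter, Finset.mem_inter, hmemT i r]
  have hTsplit : ∀ (f : Fin N → ℝ),
      ∑ i ∈ T s, f i = ∑ r : Fin β, ∑ i ∈ T s ∩ S r, f i := by
    intro f
    rw [← Finset.sum_fiberwise (T s) (fun i => (hSpart i).choose) f]
    refine Finset.sum_congr rfl fun r _ => ?_
    refine Finset.sum_congr ?_ (fun _ _ => rfl)
    ext i
    simp [Finset.mem_filter, Finset.mem_inter, hmemS i r]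
  have hScard : ((S s).card : ℝ) = ∑ r : Fin β, ((S s ∩ T r).card : ℝ) := by
    simpa using hSsplit (fun _ => (1:ℝ))
  have hTcard : ((T s).card : ℝ) = ∑ r : Fin β, ((T s ∩ S r).card : ℝ) := by
    simpa using hTsplit (fun _ => (1:ℝ))
  have hns : (0:ℝ) < ((T s).card : ℝ) := by
    exact_mod_cast Finset.card_pos.mpr (hTne s)
  -- S s is nonempty
  have hSsne : (S s).Nonempty := by
    have hin0 : 0 ≤ ∑ r ∈ Finset.univ.erase s, ((T r ∩ S s).card : ℝ) / ((T s).card : ℝ) :=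
      Finset.sum_nonneg fun r _ => div_nonneg (Nat.cast_nonneg _) (Nat.cast_nonneg _)
    have hout : (∑ r ∈ Finset.univ.erase s, ((T s ∩ S r).card : ℝ)) / ((T s).card : ℝ) < 1/2 := by
      rw [Finset.sum_div]; linarith
    have hout' : ∑ r ∈ Finset.univ.erase s, ((T s ∩ S r).card : ℝ) < ((T s).card : ℝ) / 2 := by
      rw [div_lt_iff₀ hns] at hout; linarith
    have hsum : ((T s).card : ℝ)
        = ((T s ∩ S s).card : ℝ) + ∑ r ∈ Finset.univ.erase s, ((T s ∩ S r).card : ℝ) := by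
      rw [hTcard, ← Finset.add_sum_erase _ _ (Finset.mem_univ s)]
    have hpos : (0:ℝ) < ((T s ∩ S s).card : ℝ) := by linarith
    have : (T s ∩ S s).Nonempty := Finset.card_pos.mp (by exact_mod_cast hpos)
    obtain ⟨i, hi⟩ := this
    exact ⟨i, (Finset.mem_inter.mp hi).2⟩
  have hn : (0:ℝ) < ((S s).card : ℝ) := by
    exact_mod_cast Finset.card_pos.mpr hSsne
  -- per-cell bound
  have hcellbound : ∀ r : Fin β,
      |∑ i ∈ S s ∩ T r, (x i - μ s)| ≤ ((S s ∩ T r).card : ℝ) * (ε/2) := by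
    intro r
    rcases (S s ∩ T r).eq_empty_or_nonempty with h | h
    · simp [h]
    · have hm : (0:ℝ) < ((S s ∩ T r).card : ℝ) := by
        exact_mod_cast Finset.card_pos.mpr h
      have hg : |(∑ i ∈ S s ∩ T r, x i) / ((S s ∩ T r).card : ℝ) - μ s| ≤ ε/2 := by
        by_cases hrs : r = s
        · subst hrs; linarith
        · have hr' : r ∈ Finset.univ.erase s := Finset.mem_erase.mpr ⟨hrs, Finset.mem_univ r⟩
          have hne' : (T r ∩ S s).Nonempty := by rwa [Finset.inter_comm] at h
          obtain ⟨h1, h2⟩ := hcell r hr' hne'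
          have hA : 0 ≤ |(∑ i ∈ S s ∩ T r, x i) / ((S s ∩ T r).card : ℝ) - μ s| := abs_nonneg _
          nlinarith
      have heq : ∑ i ∈ S s ∩ T r, (x i - μ s)
          = ((S s ∩ T r).card : ℝ)
            * ((∑ i ∈ S s ∩ T r, x i) / ((S s ∩ T r).card : ℝ) - μ s) := by
        rw [Finset.sum_sub_distrib, Finset.sum_const, nsmul_eq_mul, mul_sub,
          mul_div_cancel₀ _ hm.ne']
      rw [heq, abs_mul, abs_of_pos hm]
      exact mul_le_mul_of_nonneg_left hg hm.le
  -- combine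
  have key : |∑ i ∈ S s, (x i - μ s)| ≤ ((S s).card : ℝ) * (ε/2) := by
    rw [hSsplit (fun i => x i - μ s)]
    calc |∑ r : Fin β, ∑ i ∈ S s ∩ T r, (x i - μ s)|
        ≤ ∑ r : Fin β, |∑ i ∈ S s ∩ T r, (x i - μ s)| := Finset.abs_sum_le_sum_abs _ _
      _ ≤ ∑ r : Fin β, ((S s ∩ T r).card : ℝ) * (ε/2) :=
          Finset.sum_le_sum fun r _ => hcellbound r
      _ = ((S s).card : ℝ) * (ε/2) := by rw [← Finset.sum_mul, ← hScard]
  have heq2 : (∑ i ∈ S s, x i) / ((S s).card : ℝ) - μ s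
      = (∑ i ∈ S s, (x i - μ s)) / ((S s).card : ℝ) := by
    rw [Finset.sum_sub_distrib, Finset.sum_const, nsmul_eq_mul, sub_div,
      mul_div_cancel_left₀ _ hn.ne']
  rw [heq2, abs_div, abs_of_pos hn, div_le_iff₀ hn]
  nlinarith
end

section
/- Let K and M be positive integers with K ≤ M, and let γ ∈ (0, 1]. For each j ∈ {1,…,K} let p_j be a probability mass function on {1,…,M} with p_j(m) ≥ γ/M for every m, and let a_1,…,a_K be independent random variables with a_j distributed according to p_j (i.e., consider the product of the PMFs p_1,…,p_K). Then for each fixed k ∈ {1,…,K}, the probability that user k's channel differs from every other user's channel satisfies P(a_j ≠ a_k for all j ≠ k) ≥ γ/M^K. -/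
open MeasureTheory

/-! Fix, for every user, a channel of maximal probability; it has probability at least `1/M`.
Since the `K - 1` other users occupy at most `K - 1 < M` of these channels, user `k` has a
channel `c` that is maximal for nobody else. The profile in which user `k` plays `c` and every
other user its maximal channel isolates `k`, and it has probability at least
`(γ/M) · (1/M)^(K-1) = γ/M^K`. -/

open Finset in
theorem Finset.exists_forall_apply_ne_of_card_lt {ι α : Type*} [Fintype α] [DecidableEq α]
    (s : Finset ι) (g : ι → α) (hs : #s < Fintype.card α) : ∃ c, ∀ j ∈ s, g j ≠ c := by
  obtain ⟨c, -, hc⟩ := exists_mem_notMem_of_card_lt_card (s := s.image g) (t := univ)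
    (card_image_le.trans_lt hs)
  exact ⟨c, fun j hj hjc => hc (mem_image.2 ⟨j, hj, hjc⟩)⟩

theorem PMF.exists_inv_card_le_apply {α : Type*} [Fintype α] (p : PMF α) :
    ∃ a, (Fintype.card α : ENNReal)⁻¹ ≤ p a := by
  have : Nonempty α := p.support_nonempty.to_subtype.map Subtype.val
  obtain ⟨a, -, hmax⟩ := Finset.univ.exists_max_image p Finset.univ_nonempty
  refine ⟨a, (ENNReal.inv_le_iff_le_mul (by simp)
    fun h => absurd h (ENNReal.natCast_ne_top _)).2 ?_⟩
  calc (1 : ENNReal) = ∑ a', p a' := by rw [← tsum_fintype (L := .unconditional _), p.tsum_coe]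
    _ ≤ Finset.univ.card • p a := Finset.sum_le_card_nsmul _ _ _ hmax
    _ = Fintype.card α * p a := by rw [Finset.card_univ, nsmul_eq_mul]

theorem Fintype.mul_pow_card_sub_one_le_prod {ι M : Type*} [Fintype ι] [DecidableEq ι]
    [CommMonoid M] [PartialOrder M] [IsOrderedMonoid M] {x : ι → M} {a b : M} (k : ι)
    (hk : a ≤ x k) (hb : ∀ j ≠ k, b ≤ x j) : a * b ^ (Fintype.card ι - 1) ≤ ∏ j, x j := by
  rw [← Finset.mul_prod_erase Finset.univ x (Finset.mem_univ k), ← Finset.card_univ,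
    ← Finset.card_erase_of_mem (Finset.mem_univ k)]
  exact mul_le_mul' hk (Finset.pow_card_le_prod _ _ _ fun j hj => hb j (Finset.ne_of_mem_erase hj))

theorem ENNReal.ofReal_div_pow_eq_mul_inv_pow {γ : ℝ} {M K : ℕ} (hM : 0 < M) (hK : 0 < K) :
    ENNReal.ofReal (γ / (M : ℝ) ^ K) = ENNReal.ofReal (γ / M) * ((M : ENNReal)⁻¹) ^ (K - 1) := by
  have hMR : (0 : ℝ) < M := Nat.cast_pos.2 hM
  rw [ENNReal.ofReal_div_of_pos (by positivity), ENNReal.ofReal_div_of_pos hMR,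
    ENNReal.ofReal_pow hMR.le, ENNReal.ofReal_natCast, div_eq_mul_inv, div_eq_mul_inv,
    ENNReal.inv_pow, mul_assoc, ← pow_succ', Nat.sub_add_cancel hK]

theorem collision_resolution_probability_bound_general
    (K M : ℕ) (hKM : K ≤ M)
    (γ : ℝ)
    (p : Fin K → PMF (Fin M))
    (hp : ∀ j : Fin K, ∀ m : Fin M, ENNReal.ofReal (γ / (M : ℝ)) ≤ p j m)
    (k : Fin K) :
    ENNReal.ofReal (γ / (M : ℝ)^K) ≤
      MeasureTheory.Measure.pi (fun j : Fin K => (p j).toMeasure)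
        {a : Fin K → Fin M | ∀ j : Fin K, j ≠ k → a j ≠ a k} := by
  choose g hg using fun j => (p j).exists_inv_card_le_apply
  obtain ⟨c, hc⟩ := (Finset.univ.erase k).exists_forall_apply_ne_of_card_lt g
    ((Finset.card_erase_lt_of_mem (Finset.mem_univ k)).trans_le (by simpa using hKM))
  have hisolated : ∀ j, j ≠ k → Function.update g k c j ≠ Function.update g k c k := by
    intro j hj
    simpa [hj] using hc j (Finset.mem_erase.2 ⟨hj, Finset.mem_univ j⟩)
  calc ENNReal.ofReal (γ / (M : ℝ) ^ K)
      = ENNReal.ofReal (γ / M) * ((M : ENNReal)⁻¹) ^ (Fintype.card (Fin K) - 1) := by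
        rw [Fintype.card_fin]
        exact ENNReal.ofReal_div_pow_eq_mul_inv_pow (k.pos.trans_le hKM) k.pos
    _ ≤ ∏ j, p j (Function.update g k c j) :=
        Fintype.mul_pow_card_sub_one_le_prod k (by simpa using hp k c)
          fun j hj => by simpa [hj] using hg j
    _ = Measure.pi (fun j => (p j).toMeasure) {Function.update g k c} := by simp
    _ ≤ _ := by exact measure_mono (Set.singleton_subset_iff.2 hisolated)

/-- Per-round collision-resolution bound from Theorem 3 of the paper's
adversarial setting: if `K ≤ M` users pick channels independently according to
PMFs whose every entry is at least `γ/M`, then any fixed user `k` is alone on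
its channel with probability at least `γ/M^K`. -/
theorem collision_resolution_probability_bound
    (K M : ℕ) (hK : 0 < K) (hKM : K ≤ M)
    (γ : ℝ) (hγ0 : 0 < γ) (hγ1 : γ ≤ 1)
    (p : Fin K → PMF (Fin M))
    (hp : ∀ j : Fin K, ∀ m : Fin M, ENNReal.ofReal (γ / (M : ℝ)) ≤ p j m)
    (k : Fin K) :
    ENNReal.ofReal (γ / (M : ℝ)^K) ≤
      MeasureTheory.Measure.pi (fun j : Fin K => (p j).toMeasure)
        {a : Fin K → Fin M | ∀ j : Fin K, j ≠ k → a j ≠ a k} :=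
  collision_resolution_probability_bound_general K M hKM γ p hp k
end
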